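/- arXiv:math/0307352 — 5 statements merged into one kernel-verified Lean document; each statement's English description precedes it below -/
import Mathlib

section
/- For fixed squarefree n, the function m ↦ μ(n)·c_n(m) is a multiplicative function of m. -/
open ArithmeticFunction

noncomputable def ramanujanSum (n m : ℕ) : ℂ :=
  ∑ k ∈ (Finset.Icc 1 n).filter (fun k => Nat.Coprime k n),
    Complex.exp (2 * Real.pi * Complex.I * m * k / n)

/-!
Kluyver's formula `c_n(m) = ∑_{d ∣ (n, m)} μ(n/d) d` follows by detecting `gcd(k, n) = 1` with
`∑_{d ∣ gcd(k, n)} μ(d)`, exchanging the sums and using the orthogonality of `N`-th roots of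
unity. For squarefree `n` and `d ∣ n` one has `μ(n) μ(n/d) = μ(d)`, so
`μ(n) c_n(m) = G(gcd(n, m))` with `G = (μ · id) * 1` multiplicative; and `m ↦ gcd(n, m)` sends
coprime products to coprime products.
-/

open Finset Complex
open scoped ArithmeticFunction.Moebius ArithmeticFunction.zeta

theorem geom_sum_Icc_eq_zero {K : Type*} [DivisionRing K] {w : K} {N : ℕ} (hwN : w ^ N = 1)
    (hw : w ≠ 1) : ∑ j ∈ Icc 1 N, w ^ j = 0 := by
  rw [← Ico_add_one_right_eq_Icc, geom_sum_Ico hw (by omega), pow_succ, hwN, one_mul, pow_one,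
    sub_self, zero_div]

theorem sum_Icc_exp_eq_ite {N : ℕ} (hN : N ≠ 0) (m : ℕ) :
    ∑ j ∈ Icc 1 N, exp (2 * Real.pi * I * m * j / N) = if N ∣ m then (N : ℂ) else 0 := by
  have hz := isPrimitiveRoot_exp N hN
  have hpow (j : ℕ) :
      exp (2 * Real.pi * I * m * j / N) = (exp (2 * Real.pi * I / N) ^ m) ^ j := by
    rw [← exp_nat_mul, ← exp_nat_mul]
    congr 1
    ring
  simp_rw [hpow]
  split_ifs with hdvd
  · simp [(hz.pow_eq_one_iff_dvd m).mpr hdvd]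
  · refine geom_sum_Icc_eq_zero ?_ (mt (hz.pow_eq_one_iff_dvd m).mp hdvd)
    rw [pow_right_comm, hz.pow_eq_one, one_pow]

theorem sum_filter_dvd_Icc {M : Type*} [AddCommMonoid M] (f : ℕ → M) {d : ℕ} (hd : 0 < d)
    (n : ℕ) :
    ∑ k ∈ (Icc 1 n).filter (d ∣ ·), f k = ∑ j ∈ Icc 1 (n / d), f (d * j) := by
  rw [← sum_image fun _ _ _ _ h => Nat.eq_of_mul_eq_mul_left hd h]
  congr 1
  ext k
  simp only [mem_filter, mem_Icc, mem_image, Nat.le_div_iff_mul_le hd]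
  constructor
  · rintro ⟨⟨hk, hkn⟩, j, rfl⟩
    exact ⟨j, ⟨Nat.pos_of_mul_pos_left hk, by rwa [mul_comm]⟩, rfl⟩
  · rintro ⟨j, ⟨hj, hjn⟩, rfl⟩
    exact ⟨⟨Nat.mul_pos hd hj, by rwa [mul_comm]⟩, dvd_mul_right d j⟩

theorem Nat.filter_dvd_divisors_eq_divisors_gcd {n : ℕ} (hn : n ≠ 0) (m : ℕ) :
    n.divisors.filter (· ∣ m) = (n.gcd m).divisors := by
  ext d
  simp [Nat.dvd_gcd_iff, hn]

theorem sum_divisors_moebius (g : ℕ) : ∑ d ∈ g.divisors, μ d = if g = 1 then 1 else 0 := by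
  rw [← coe_mul_zeta_apply, moebius_mul_coe_zeta, one_apply]

theorem ramanujanSum_eq_sum_divisors_gcd {n : ℕ} (hn : n ≠ 0) (m : ℕ) :
    ramanujanSum n m = ∑ d ∈ (n.gcd m).divisors, (μ (n / d) : ℂ) * d := by
  set e : ℕ → ℂ := fun k => exp (2 * Real.pi * I * m * k / n)
  have hcoprime (k : ℕ) :
      (if k.Coprime n then 1 else 0 : ℂ) =
        ∑ d ∈ n.divisors, if d ∣ k then (μ d : ℂ) else 0 := by
    rw [← sum_filter, Nat.filter_dvd_divisors_eq_divisors_gcd hn, Nat.gcd_comm]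
    exact_mod_cast (sum_divisors_moebius (k.gcd n)).symm
  have hmultiples (d : ℕ) (hd : d ∈ n.divisors) :
      ∑ k ∈ (Icc 1 n).filter (d ∣ ·), e k =
        if n / d ∣ m then ((n / d : ℕ) : ℂ) else 0 := by
    obtain ⟨hdn, -⟩ := Nat.mem_divisors.mp hd
    have hd0 : 0 < d := Nat.pos_of_dvd_of_pos hdn (Nat.pos_of_ne_zero hn)
    have hnd : n / d ≠ 0 := (Nat.div_ne_zero_iff_of_dvd hdn).mpr ⟨hn, hd0.ne'⟩
    rw [sum_filter_dvd_Icc e hd0, ← sum_Icc_exp_eq_ite hnd]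
    refine sum_congr rfl fun j _ => ?_
    simp only [e, Nat.cast_div hdn (Nat.cast_ne_zero.mpr hd0.ne')]
    push_cast
    field_simp
  calc ramanujanSum n m = ∑ k ∈ Icc 1 n, (if k.Coprime n then 1 else 0 : ℂ) * e k := by
        simp [ramanujanSum, e, sum_filter]
    _ = ∑ d ∈ n.divisors, (μ d : ℂ) * ∑ k ∈ (Icc 1 n).filter (d ∣ ·), e k := by
        simp_rw [hcoprime, sum_mul, ite_mul, zero_mul]
        rw [sum_comm]
        simp_rw [← sum_filter, mul_sum]
    _ = ∑ d ∈ n.divisors,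
          (μ (n / (n / d)) : ℂ) * if n / d ∣ m then ((n / d : ℕ) : ℂ) else 0 := by
        refine sum_congr rfl fun d hd => ?_
        rw [hmultiples d hd, Nat.div_div_self (Nat.mem_divisors.mp hd).1 hn]
    _ = ∑ d ∈ n.divisors, if d ∣ m then (μ (n / d) : ℂ) * d else 0 := by
        rw [Nat.sum_div_divisors n fun d => (μ (n / d) : ℂ) * if d ∣ m then (d : ℂ) else 0]
        simp_rw [mul_ite, mul_zero]
    _ = ∑ d ∈ (n.gcd m).divisors, (μ (n / d) : ℂ) * d := by
        rw [← sum_filter, Nat.filter_dvd_divisors_eq_divisors_gcd hn]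

theorem moebius_mul_moebius_div_of_squarefree {n d : ℕ} (hn : Squarefree n) (hd : d ∣ n) :
    μ n * μ (n / d) = μ d := by
  obtain ⟨e, rfl⟩ := hd
  rw [Nat.mul_div_cancel_left e (Nat.pos_of_ne_zero (left_ne_zero_of_mul hn.ne_zero)),
    isMultiplicative_moebius.map_mul_of_coprime (Nat.coprime_of_squarefree_mul hn), mul_assoc,
    ← sq, moebius_sq_eq_one_of_squarefree hn.of_mul_right, mul_one]

theorem moebius_mul_ramanujanSum_of_squarefree {n : ℕ} (hn : Squarefree n) (m : ℕ) :
    (μ n : ℂ) * ramanujanSum n m =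
      (pmul (μ : ArithmeticFunction ℂ) (ArithmeticFunction.id : ArithmeticFunction ℕ) * ζ)
        (n.gcd m) := by
  rw [ramanujanSum_eq_sum_divisors_gcd hn.ne_zero, coe_mul_zeta_apply, mul_sum]
  refine sum_congr rfl fun d hd => ?_
  have hdn : d ∣ n := (Nat.mem_divisors.mp hd).1.trans (Nat.gcd_dvd_left n m)
  rw [← mul_assoc, ← Int.cast_mul, moebius_mul_moebius_div_of_squarefree hn hdn]
  simp [pmul_apply]

theorem ramanujanSum_multiplicative_in_m_general (n : ℕ) (hsq : Squarefree n) :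
    (moebius n : ℂ) * ramanujanSum n 1 = 1 ∧
    ∀ a b : ℕ, 0 < a → 0 < b → Nat.Coprime a b →
      (moebius n : ℂ) * ramanujanSum n (a * b) =
        ((moebius n : ℂ) * ramanujanSum n a) * ((moebius n : ℂ) * ramanujanSum n b) := by
  have hG : (pmul (μ : ArithmeticFunction ℂ)
      (ArithmeticFunction.id : ArithmeticFunction ℕ) * ζ).IsMultiplicative :=
    (isMultiplicative_moebius.intCast.pmul isMultiplicative_id.natCast).mul
      isMultiplicative_zeta.natCast
  simp only [moebius_mul_ramanujanSum_of_squarefree hsq]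
  refine ⟨by rw [Nat.gcd_one_right, hG.map_one], fun a b _ _ hab => ?_⟩
  rw [Nat.Coprime.gcd_mul n hab]
  exact hG.map_mul_of_coprime (hab.gcd_both n n)

theorem ramanujanSum_multiplicative_in_m (n : ℕ) (hn : 0 < n) (hsq : Squarefree n) :
    (moebius n : ℂ) * ramanujanSum n 1 = 1 ∧
    ∀ a b : ℕ, 0 < a → 0 < b → Nat.Coprime a b →
      (moebius n : ℂ) * ramanujanSum n (a * b) =
        ((moebius n : ℂ) * ramanujanSum n a) * ((moebius n : ℂ) * ramanujanSum n b) :=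
  ramanujanSum_multiplicative_in_m_general n hsq
end

section
/- Orthogonality of Ramanujan sums: if r₁ | r and r₂ | r, then (1/r)·Σ_{m=1}^{r} c_{r₁}(m)·c_{r₂}(m) equals φ(r₁) if r₁ = r₂ and 0 otherwise. -/
open Finset

theorem sum_Icc_pow_of_pow_eq_one {R : Type*} [CommRing R] [IsDomain R] [DecidableEq R]
    {z : R} {r : ℕ} (hz : z ^ r = 1) : ∑ m ∈ Icc 1 r, z ^ m = if z = 1 then (r : R) else 0 := by
  split_ifs with h
  · simp [h]
  have hgeom : ∑ i ∈ range r, z ^ i = 0 := by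
    have := geom_sum_mul z r
    rw [hz, sub_self, mul_eq_zero] at this
    exact this.resolve_right (sub_ne_zero.2 h)
  rw [← Ico_add_one_right_eq_Icc, sum_Ico_eq_sum_range]
  simp only [add_comm 1, pow_succ', ← mul_sum, Nat.add_sub_cancel, hgeom, mul_zero]

theorem ramanujanSum_eq_sum_primitiveRoots {n : ℕ} (hn : 0 < n) (m : ℕ) :
    ramanujanSum n m = ∑ ζ ∈ primitiveRoots n ℂ, ζ ^ m := by
  have : NeZero n := ⟨hn.ne'⟩
  set ζ := Complex.exp (2 * Real.pi * Complex.I / n)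
  have hζ : IsPrimitiveRoot ζ n := Complex.isPrimitiveRoot_exp n hn.ne'
  have hterm (k : ℕ) : Complex.exp (2 * Real.pi * Complex.I * m * k / n) = (ζ ^ k) ^ m := by
    rw [← pow_mul, ← Complex.exp_nat_mul]
    push_cast
    ring_nf
  simp only [ramanujanSum, hterm]
  refine sum_nbij (ζ ^ ·) (fun k hk => ?_) (fun a ha b hb hab => ?_) (fun x hx => ?_)
    fun _ _ => rfl
  · exact (mem_primitiveRoots hn).2 (hζ.pow_of_coprime k (mem_filter.1 hk).2)
  · simp only [coe_filter, mem_Icc, Set.mem_ofPred_eq] at ha hb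
    rw [(hζ.isOfFinOrder hn.ne').pow_eq_pow_iff_modEq, ← hζ.eq_orderOf] at hab
    exact hab.eq_of_abs_lt (abs_sub_lt_iff.2 ⟨by omega, by omega⟩)
  · have hx' := (mem_primitiveRoots hn).1 hx
    obtain ⟨i, hi, rfl⟩ := hζ.eq_pow_of_pow_eq_one hx'.pow_eq_one
    have hci := (hζ.pow_iff_coprime hn i).1 hx'
    -- `k` runs over `1, …, n`, so the root `ζ ^ 0` (only primitive for `n = 1`) is hit by `k = n`.
    rcases i.eq_zero_or_pos with rfl | hi0
    · obtain rfl : n = 1 := Nat.coprime_zero_left n |>.1 hci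
      exact ⟨1, by simp, by simpa using hζ.pow_eq_one⟩
    · exact ⟨i, mem_filter.2 ⟨mem_Icc.2 ⟨hi0, hi.le⟩, hci⟩, rfl⟩

theorem sum_primitiveRoots_ite_mul_eq_one {K M : Type*} [Field K] [DecidableEq K] [AddCommMonoid M]
    {ζ : K} {k l : ℕ} (hζ : IsPrimitiveRoot ζ k) (hl : 0 < l) (c : M) :
    ∑ η ∈ primitiveRoots l K, (if ζ * η = 1 then c else 0) = if k = l then c else 0 := by
  split_ifs with hkl
  · subst hkl
    have hζ0 : ζ ≠ 0 := hζ.ne_zero hl.ne'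
    simp_rw [mul_eq_one_iff_inv_eq₀ hζ0]
    exact sum_ite_eq _ _ _ |>.trans (if_pos ((mem_primitiveRoots hl).2 hζ.inv))
  · refine sum_eq_zero fun η hη => if_neg fun h => hkl ?_
    rw [eq_inv_of_mul_eq_one_right h] at hη
    exact hζ.inv.unique ((mem_primitiveRoots hl).1 hη)

theorem ramanujanSum_orthogonality (r r₁ r₂ : ℕ) (hr : 0 < r)
    (h₁ : r₁ ∣ r) (h₂ : r₂ ∣ r) :
    (1 / (r : ℂ)) * ∑ m ∈ Finset.Icc 1 r, ramanujanSum r₁ m * ramanujanSum r₂ m =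
      if r₁ = r₂ then (Nat.totient r₁ : ℂ) else 0 := by
  have hr₁ := Nat.pos_of_dvd_of_pos h₁ hr
  have hr₂ := Nat.pos_of_dvd_of_pos h₂ hr
  have hpair : ∀ ζ ∈ primitiveRoots r₁ ℂ, ∀ η ∈ primitiveRoots r₂ ℂ,
      ∑ m ∈ Icc 1 r, (ζ * η) ^ m = if ζ * η = 1 then (r : ℂ) else 0 := by
    intro ζ hζ η hη
    refine sum_Icc_pow_of_pow_eq_one ?_
    rw [mul_pow, (((mem_primitiveRoots hr₁).1 hζ).pow_eq_one_iff_dvd r).2 h₁,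
      (((mem_primitiveRoots hr₂).1 hη).pow_eq_one_iff_dvd r).2 h₂, one_mul]
  calc _ = 1 / (r : ℂ) * ∑ ζ ∈ primitiveRoots r₁ ℂ, ∑ η ∈ primitiveRoots r₂ ℂ,
        ∑ m ∈ Icc 1 r, (ζ * η) ^ m := by
        simp_rw [ramanujanSum_eq_sum_primitiveRoots hr₁, ramanujanSum_eq_sum_primitiveRoots hr₂,
          sum_mul_sum, ← mul_pow]
        rw [sum_comm]
        simp_rw [sum_comm (s := Icc 1 r)]
    _ = 1 / (r : ℂ) * ∑ ζ ∈ primitiveRoots r₁ ℂ, if r₁ = r₂ then (r : ℂ) else 0 := by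
        congr 1
        refine sum_congr rfl fun ζ hζ => ?_
        rw [sum_congr rfl (hpair ζ hζ), sum_primitiveRoots_ite_mul_eq_one
          ((mem_primitiveRoots hr₁).1 hζ) hr₂]
    _ = _ := by
        split_ifs
        · have hr0 : (r : ℂ) ≠ 0 := by exact_mod_cast hr.ne'
          rw [sum_const, Complex.card_primitiveRoots, nsmul_eq_mul]
          field_simp
        · simp
end

section
/- For every positive integer m and real s > 1, Σ_{n=1}^{∞} c_n(m)/n^s = σ_{1-s}(m)/ζ(s), where σ_{1-s}(m) = Σ_{d|m} d^{1-s}. -/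
open Finset ArithmeticFunction LSeries.notation
open scoped ArithmeticFunction.Moebius

theorem Finset.sum_Icc_one_pow_eq_mul_geom_sum {R : Type*} [Semiring R] (z : R) (q : ℕ) :
    ∑ j ∈ Icc 1 q, z ^ j = z * ∑ j ∈ range q, z ^ j := by
  rw [← Ico_add_one_right_eq_Icc, sum_Ico_eq_sum_range, mul_sum]
  simp [pow_succ', add_comm]

theorem IsPrimitiveRoot.sum_Icc_pow_mul_eq_ite {R : Type*} [CommRing R] [IsDomain R] {ζ : R}
    {q : ℕ} (hζ : IsPrimitiveRoot ζ q) (m : ℕ) :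
    ∑ j ∈ Icc 1 q, ζ ^ (m * j) = if q ∣ m then (q : R) else 0 := by
  simp_rw [pow_mul, sum_Icc_one_pow_eq_mul_geom_sum]
  split_ifs with hqm
  · simp [(hζ.pow_eq_one_iff_dvd m).mpr hqm]
  · have hz : ζ ^ m - 1 ≠ 0 := sub_ne_zero.mpr (mt (hζ.pow_eq_one_iff_dvd m).mp hqm)
    have hzq : (ζ ^ m) ^ q = 1 := by rw [← pow_mul, mul_comm, pow_mul, hζ.pow_eq_one, one_pow]
    have hgeom := geom_sum_mul (ζ ^ m) q
    rw [hzq, sub_self, mul_eq_zero] at hgeom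
    simp [hgeom.resolve_right hz]

theorem Nat.Icc_one_filter_dvd_eq {d : ℕ} (hd : d ≠ 0) (n : ℕ) :
    {k ∈ Icc 1 n | d ∣ k} = (Icc 1 (n / d)).map ⟨(d * ·), mul_right_injective₀ hd⟩ := by
  have hd0 := Nat.pos_of_ne_zero hd
  ext k
  simp only [mem_filter, mem_Icc, mem_map, Function.Embedding.coeFn_mk]
  constructor
  · rintro ⟨⟨hk1, hkn⟩, j, rfl⟩
    exact ⟨j, ⟨Nat.pos_of_mul_pos_left hk1, (Nat.le_div_iff_mul_le hd0).mpr (by linarith)⟩, rfl⟩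
  · rintro ⟨j, ⟨hj1, hjn⟩, rfl⟩
    exact ⟨⟨Nat.mul_pos hd0 hj1, by nlinarith [Nat.div_mul_le_self n d]⟩, dvd_mul_right d j⟩

theorem ArithmeticFunction.sum_moebius_divisors_filter_dvd {R : Type*} [Ring R] {n : ℕ}
    (hn : n ≠ 0) (k : ℕ) :
    ∑ d ∈ n.divisors with d ∣ k, (μ d : R) = if k.Coprime n then 1 else 0 := by
  have hdiv : {d ∈ n.divisors | d ∣ k} = (n.gcd k).divisors := by
    rw [← Nat.divisors_filter_dvd_of_dvd hn (Nat.gcd_dvd_left n k)]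
    exact filter_congr fun d hd => by simp [Nat.dvd_gcd_iff, Nat.dvd_of_mem_divisors hd]
  rw [hdiv, ← Int.cast_sum, ← coe_mul_zeta_apply, moebius_mul_coe_zeta, one_apply, Nat.gcd_comm]
  simp only [Nat.Coprime, apply_ite (Int.cast : ℤ → R), Int.cast_one, Int.cast_zero]

def idOnDivisors (m d : ℕ) : ℂ := if d ∣ m then d else 0

theorem ramanujanSum_eq_convolution (m : ℕ) {n : ℕ} (hn : n ≠ 0) :
    ramanujanSum n m = (↗μ ⍟ idOnDivisors m) n := by
  set ζ := Complex.exp (2 * Real.pi * Complex.I / n)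
  have hζ : IsPrimitiveRoot ζ n := Complex.isPrimitiveRoot_exp n hn
  have hexp (k : ℕ) : Complex.exp (2 * Real.pi * Complex.I * m * k / n) = ζ ^ (m * k) := by
    rw [← Complex.exp_nat_mul]
    push_cast
    ring_nf
  calc ramanujanSum n m
      = ∑ k ∈ Icc 1 n, (∑ d ∈ n.divisors with d ∣ k, (μ d : ℂ)) * ζ ^ (m * k) := by
        simp_rw [ramanujanSum, sum_moebius_divisors_filter_dvd hn, ite_mul, one_mul, zero_mul,
          ← sum_filter, hexp]
    _ = ∑ d ∈ n.divisors, (μ d : ℂ) * ∑ k ∈ Icc 1 n with d ∣ k, ζ ^ (m * k) := by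
        simp_rw [sum_filter, sum_mul, mul_sum, ite_mul, zero_mul, mul_ite, mul_zero]
        exact sum_comm
    _ = ∑ d ∈ n.divisors, (μ d : ℂ) * idOnDivisors m (n / d) := by
        refine sum_congr rfl fun d hd => ?_
        have hd0 : d ≠ 0 := (Nat.pos_of_mem_divisors hd).ne'
        rw [Nat.Icc_one_filter_dvd_eq hd0, sum_map]
        simp_rw [Function.Embedding.coeFn_mk, mul_left_comm m d, pow_mul ζ d]
        rw [(hζ.pow_of_dvd hd0 (Nat.dvd_of_mem_divisors hd)).sum_Icc_pow_mul_eq_ite]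
        rfl
    _ = (↗μ ⍟ idOnDivisors m) n := by
        rw [LSeries.convolution_def]
        exact (Nat.sum_divisorsAntidiagonal fun a b => (μ a : ℂ) * idOnDivisors m b).symm

theorem LSeriesHasSum_idOnDivisors {m : ℕ} (hm : m ≠ 0) (s : ℂ) :
    LSeriesHasSum (idOnDivisors m) s (∑ d ∈ m.divisors, (d : ℂ) ^ (1 - s)) := by
  have hterm {d : ℕ} (hd : d ∈ m.divisors) :
      LSeries.term (idOnDivisors m) s d = (d : ℂ) ^ (1 - s) := by
    have hd0 := (Nat.pos_of_mem_divisors hd).ne'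
    rw [LSeries.term_of_ne_zero hd0, idOnDivisors, if_pos (Nat.dvd_of_mem_divisors hd),
      Complex.cpow_sub _ _ (Nat.cast_ne_zero.mpr hd0), Complex.cpow_one]
  rw [← sum_congr rfl fun d hd => hterm hd]
  exact hasSum_sum_of_ne_finset_zero fun d hd => by simp_all [LSeries.term, idOnDivisors]

theorem LSeriesHasSum_moebius {s : ℂ} (hs : 1 < s.re) : LSeriesHasSum ↗μ s (riemannZeta s)⁻¹ := by
  have hL := LSeries_zeta_mul_Lseries_moebius hs
  rw [LSeries_zeta_eq_riemannZeta hs] at hL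
  exact eq_inv_of_mul_eq_one_right hL ▸ (LSeriesSummable_moebius_iff.mpr hs).LSeriesHasSum

theorem LSeriesHasSum.hasSum_nat_succ {f : ℕ → ℂ} {s a : ℂ} (h : LSeriesHasSum f s a) :
    HasSum (fun n : ℕ => f (n + 1) / ((n + 1 : ℕ) : ℂ) ^ s) a := by
  simpa [LSeries.term_of_ne_zero] using (hasSum_nat_add_iff' 1).mpr h

theorem ramanujanSum_dirichlet_series (m : ℕ) (hm : 0 < m) (s : ℝ) (hs : 1 < s) :
    ∑' n : ℕ, ramanujanSum (n + 1) m / ((n + 1 : ℕ) : ℂ) ^ (s : ℂ) =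
      (∑ d ∈ m.divisors, (d : ℂ) ^ ((1 : ℂ) - (s : ℂ))) / riemannZeta s := by
  have hs' : 1 < (s : ℂ).re := by simpa using hs
  have h := ((LSeriesHasSum_moebius hs').convolution
    (LSeriesHasSum_idOnDivisors hm.ne' s)).hasSum_nat_succ
  rw [div_eq_inv_mul]
  refine HasSum.tsum_eq ?_
  simpa only [ramanujanSum_eq_convolution m (Nat.succ_ne_zero _)] using h
end

section
/- Every integer occurs as a coefficient of some cyclotomic polynomial: {a_n(k) : n, k ∈ ℕ} = ℤ. -/
/-!
Suzuki's argument. Let `n = p₁ ⋯ p_t` be a product of an odd number `t` of primes any two of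
which sum to at least `N`. In `Φ_n = ∏_{d ∣ n} (1 - X ^ d) ^ μ(n / d)` taken modulo `X ^ N`, only
the divisors `1` and `pᵢ` survive, every other divisor being at least the product of two of the
primes. Hence `Φ_n ≡ (1 - ∑ X ^ pᵢ) / (1 - X)`, and the coefficient of `X ^ k` for `k < N` is
`1 - #{i | pᵢ ≤ k}`. Since `∑ 1 / p` diverges, some interval `(x, 2x]` contains arbitrarily many
primes, which realizes every value `1 - j` with `j ≥ 1` at an odd exponent `k`; finally
`Φ_{2n}(X) = Φ_n(-X)` for odd `n > 1` flips the sign.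
-/

open Polynomial Finset ArithmeticFunction ArithmeticFunction.Moebius

theorem sum_moebius_div_divisors {n : ℕ} (hn : n ≠ 1) : ∑ d ∈ n.divisors, μ (n / d) = 0 := by
  rw [Nat.sum_div_divisors n (μ ·), ← coe_mul_zeta_apply, moebius_mul_coe_zeta, one_apply_ne hn]

theorem zpow_mul_pow_toNat_neg {G : Type*} [GroupWithZero G] {a : G} (ha : a ≠ 0) (z : ℤ) :
    a ^ z * a ^ (-z).toNat = a ^ z.toNat := by
  calc a ^ z * a ^ (-z).toNat = a ^ ((z.toNat : ℤ) - (-z).toNat) * a ^ (-z).toNat := by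
        rw [Int.toNat_sub_toNat_neg]
    _ = a ^ z.toNat := by
        rw [zpow_sub₀ ha, zpow_natCast, zpow_natCast, div_mul_cancel₀ _ (pow_ne_zero _ ha)]

theorem cyclotomic_mul_prod_X_pow_sub_one_pow_toNat (R : Type*) [CommRing R] [IsDomain R] (n : ℕ) :
    cyclotomic n R * ∏ d ∈ n.divisors, (X ^ d - 1) ^ (-μ (n / d)).toNat =
      ∏ d ∈ n.divisors, (X ^ d - 1) ^ (μ (n / d)).toNat := by
  apply IsFractionRing.injective R[X] (RatFunc R)
  simp only [map_mul, map_prod, map_pow]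
  rw [cyclotomic_eq_prod_X_pow_sub_one_pow_moebius, Nat.prod_divisorsAntidiagonal'
    (fun a b => algebraMap R[X] (RatFunc R) (X ^ b - 1) ^ μ a), ← prod_mul_distrib]
  refine prod_congr rfl fun d hd => zpow_mul_pow_toNat_neg ?_ _
  rw [map_ne_zero_iff _ (IsFractionRing.injective R[X] (RatFunc R))]
  simpa using X_pow_sub_C_ne_zero (Nat.pos_of_mem_divisors hd) (1 : R)

theorem cyclotomic_mul_prod_one_sub_X_pow_pow_toNat (R : Type*) [CommRing R] [IsDomain R] {n : ℕ}
    (hn : n ≠ 1) :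
    cyclotomic n R * ∏ d ∈ n.divisors, (1 - X ^ d) ^ (-μ (n / d)).toNat =
      ∏ d ∈ n.divisors, (1 - X ^ d) ^ (μ (n / d)).toNat := by
  have hsum : ∑ d ∈ n.divisors, (-μ (n / d)).toNat = ∑ d ∈ n.divisors, (μ (n / d)).toNat := by
    have := sum_moebius_div_divisors hn
    rw [← sum_congr rfl fun d _ => Int.toNat_sub_toNat_neg (μ (n / d)), sum_sub_distrib,
      sub_eq_zero] at this
    exact_mod_cast this.symm
  have hneg (e : ℕ → ℕ) : ∏ d ∈ n.divisors, (1 - X ^ d : R[X]) ^ e d =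
      (-1) ^ (∑ d ∈ n.divisors, e d) * ∏ d ∈ n.divisors, (X ^ d - 1) ^ e d := by
    rw [← prod_pow_eq_pow_sum, ← prod_mul_distrib]
    exact prod_congr rfl fun d _ => by rw [← mul_pow, neg_one_mul, neg_sub]
  rw [hneg, hneg, hsum, mul_left_comm, cyclotomic_mul_prod_X_pow_sub_one_pow_toNat]

section Truncation

variable {R : Type*} [CommRing R] {N : ℕ}

theorem mk_span_X_pow_X_pow_of_le {d : ℕ} (h : N ≤ d) :
    Ideal.Quotient.mk (Ideal.span {X ^ N}) (X ^ d : R[X]) = 0 :=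
  Ideal.Quotient.eq_zero_iff_mem.2 (Ideal.mem_span_singleton.2 (pow_dvd_pow X h))

theorem coeff_eq_of_mk_span_X_pow_eq {f g : R[X]}
    (h : Ideal.Quotient.mk (Ideal.span {X ^ N}) f = Ideal.Quotient.mk (Ideal.span {X ^ N}) g)
    {k : ℕ} (hk : k < N) : f.coeff k = g.coeff k := by
  rw [Ideal.Quotient.eq, Ideal.mem_span_singleton, X_pow_dvd_iff] at h
  exact sub_eq_zero.1 (by simpa only [coeff_sub] using h k hk)

theorem mk_span_X_pow_prod_one_sub_X_pow {S : Finset ℕ}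
    (hS : ∀ a ∈ S, ∀ b ∈ S, a ≠ b → N ≤ a + b) :
    Ideal.Quotient.mk (Ideal.span {X ^ N}) (∏ s ∈ S, (1 - X ^ s) : R[X]) =
      Ideal.Quotient.mk (Ideal.span {X ^ N}) (1 - ∑ s ∈ S, X ^ s) := by
  induction S using Finset.induction_on with
  | empty => simp
  | insert a S ha ih =>
    have hcross : Ideal.Quotient.mk (Ideal.span {X ^ N}) (X ^ a : R[X]) *
        ∑ s ∈ S, Ideal.Quotient.mk (Ideal.span {X ^ N}) (X ^ s) = 0 := by
      rw [mul_sum]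
      refine sum_eq_zero fun s hs => ?_
      rw [← map_mul, ← pow_add, mk_span_X_pow_X_pow_of_le
        (hS a (mem_insert_self a S) s (mem_insert_of_mem hs) (ne_of_mem_of_not_mem hs ha).symm)]
    rw [prod_insert ha, sum_insert ha, map_mul, ih fun a ha b hb => hS a (mem_insert_of_mem ha) b
      (mem_insert_of_mem hb)]
    simp only [map_sub, map_one, map_add, map_sum]
    linear_combination hcross

theorem mk_span_X_pow_prod_one_sub_X_pow_pow {S T : Finset ℕ} (hTS : T ⊆ S)
    (hST : ∀ d ∈ S, d ∉ T → N ≤ d) (e : ℕ → ℕ) :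
    Ideal.Quotient.mk (Ideal.span {X ^ N}) (∏ d ∈ S, (1 - X ^ d) ^ e d : R[X]) =
      Ideal.Quotient.mk (Ideal.span {X ^ N}) (∏ d ∈ T, (1 - X ^ d) ^ e d) := by
  simp only [map_prod]
  refine (prod_subset hTS fun d hd hdT => ?_).symm
  rw [map_pow, map_sub, map_one, mk_span_X_pow_X_pow_of_le (hST d hd hdT), sub_zero, one_pow]

theorem coeff_one_sub_sum_X_pow_mul_geom_sum (F : Finset ℕ) {k : ℕ} (hk : k < N) :
    ((1 - ∑ p ∈ F, X ^ p) * ∑ i ∈ range N, X ^ i : R[X]).coeff k = 1 - #{p ∈ F | p ≤ k} := by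
  have hgeom : ∀ j, (∑ i ∈ range N, X ^ i : R[X]).coeff j = if j < N then 1 else 0 := by
    intro j
    simp only [finsetSum_coeff, coeff_X_pow, sum_ite_eq, mem_range]
  rw [sub_mul, one_mul, sum_mul, coeff_sub, hgeom, if_pos hk, finsetSum_coeff, ← sum_boole]
  congr 1
  refine sum_congr rfl fun p _ => ?_
  rw [coeff_X_pow_mul', hgeom]
  split_ifs <;> first | rfl | omega

end Truncation

theorem Nat.exists_primes_ne_mul_dvd {d : ℕ} (hd : Squarefree d) (hd1 : d ≠ 1) (hdp : ¬ d.Prime) :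
    ∃ p q, p.Prime ∧ q.Prime ∧ p ≠ q ∧ p * q ∣ d := by
  have hcard : 1 < #d.primeFactors := by
    by_contra! h
    rcases Nat.le_one_iff_eq_zero_or_eq_one.1 h with h | h
    · rcases Nat.primeFactors_eq_empty.1 (Finset.card_eq_zero.1 h) with rfl | rfl
      exacts [not_squarefree_zero hd, hd1 rfl]
    · obtain ⟨p, hp⟩ := Finset.card_eq_one.1 h
      apply hdp
      rw [← Nat.prod_primeFactors_of_squarefree hd, hp, prod_singleton]
      exact Nat.prime_of_mem_primeFactors (hp ▸ mem_singleton_self p)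
  obtain ⟨p, hp, q, hq, hpq⟩ := one_lt_card.1 hcard
  have hp' := Nat.mem_primeFactors.1 hp
  have hq' := Nat.mem_primeFactors.1 hq
  exact ⟨p, q, hp'.1, hq'.1, hpq,
    ((Nat.coprime_primes hp'.1 hq'.1).2 hpq).mul_dvd_of_dvd_of_dvd hp'.2.1 hq'.2.1⟩

section PrimeProduct

variable {F : Finset ℕ}

theorem squarefree_prod_primes (hF : ∀ p ∈ F, p.Prime) : Squarefree (∏ p ∈ F, p) :=
  squarefree_prod_of_pairwise_isCoprime
    (fun p hp q hq hpq =>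
      Nat.coprime_iff_isRelPrime.1 ((Nat.coprime_primes (hF p hp) (hF q hq)).2 hpq))
    fun p hp => (hF p hp).squarefree

theorem moebius_prod_primes (hF : ∀ p ∈ F, p.Prime) : μ (∏ p ∈ F, p) = (-1) ^ #F := by
  rw [isMultiplicative_moebius.map_prod_of_prime F hF,
    prod_congr rfl fun p hp => moebius_apply_prime (hF p hp), prod_const]

theorem le_of_dvd_prod_primes (hF : ∀ p ∈ F, p.Prime) {N : ℕ}
    (hN : ∀ p ∈ F, ∀ q ∈ F, p ≠ q → N ≤ p + q) {d : ℕ} (hd : d ∣ ∏ p ∈ F, p) (hd1 : d ≠ 1)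
    (hdF : d ∉ F) : N ≤ d := by
  have hn0 : ∏ p ∈ F, p ≠ 0 := prod_ne_zero_iff.2 fun p hp => (hF p hp).ne_zero
  have hmem : ∀ r, r.Prime → r ∣ d → r ∈ F := fun r hr hrd => by
    rw [← Nat.primeFactors_prod hF]
    exact Nat.mem_primeFactors.2 ⟨hr, hrd.trans hd, hn0⟩
  obtain ⟨p, q, hp, hq, hpq, hpqd⟩ := Nat.exists_primes_ne_mul_dvd
    ((squarefree_prod_primes hF).squarefree_of_dvd hd) hd1 fun hdp => hdF (hmem d hdp dvd_rfl)
  calc N ≤ p + q := hN p (hmem p hp (dvd_of_mul_right_dvd hpqd)) q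
          (hmem q hq (dvd_of_mul_left_dvd hpqd)) hpq
    _ ≤ p * q := Nat.add_le_mul hp.two_le hq.two_le
    _ ≤ d := Nat.le_of_dvd (Nat.pos_of_dvd_of_pos hd (Nat.pos_of_ne_zero hn0)) hpqd

theorem moebius_prod_primes_div (hF : ∀ p ∈ F, p.Prime) {p : ℕ} (hp : p ∈ F) :
    μ ((∏ q ∈ F, q) / p) = (-1) ^ (#F - 1) := by
  rw [← prod_erase_mul F (fun q => q) hp, Nat.mul_div_cancel _ (hF p hp).pos,
    moebius_prod_primes fun q hq => hF q (mem_of_mem_erase hq), card_erase_of_mem hp]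

theorem mk_span_X_pow_cyclotomic_prod_primes_mul_one_sub_X (R : Type*) [CommRing R] [IsDomain R]
    (hF : ∀ p ∈ F, p.Prime) (hodd : Odd #F) {N : ℕ}
    (hN : ∀ p ∈ F, ∀ q ∈ F, p ≠ q → N ≤ p + q) :
    Ideal.Quotient.mk (Ideal.span {X ^ N}) (cyclotomic (∏ p ∈ F, p) R * (1 - X)) =
      Ideal.Quotient.mk (Ideal.span {X ^ N}) (1 - ∑ p ∈ F, X ^ p) := by
  set n := ∏ p ∈ F, p
  have h1F : 1 ∉ F := fun h => Nat.not_prime_one (hF 1 h)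
  have hn0 : n ≠ 0 := prod_ne_zero_iff.2 fun p hp => (hF p hp).ne_zero
  have hn1 : n ≠ 1 := by
    obtain ⟨p, hp⟩ := card_pos.1 hodd.pos
    exact fun h => (hF p hp).not_dvd_one (h ▸ dvd_prod_of_mem _ hp)
  have hμn : μ n = -1 := (moebius_prod_primes hF).trans hodd.neg_one_pow
  have hμp : ∀ p ∈ F, μ (n / p) = 1 := fun p hp =>
    (moebius_prod_primes_div hF hp).trans (Nat.Odd.sub_odd hodd odd_one).neg_one_pow
  have hsub : insert 1 F ⊆ n.divisors := insert_subset (Nat.one_mem_divisors.2 hn0)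
    fun p hp => Nat.mem_divisors.2 ⟨dvd_prod_of_mem _ hp, hn0⟩
  have hbig : ∀ d ∈ n.divisors, d ∉ insert 1 F → N ≤ d := fun d hd hdF =>
    le_of_dvd_prod_primes hF hN (Nat.dvd_of_mem_divisors hd)
      (fun h => hdF (h ▸ mem_insert_self 1 F)) fun h => hdF (mem_insert_of_mem h)
  have hL : ∏ p ∈ F, ((1 : R[X]) - X ^ p) ^ (-μ (n / p)).toNat = 1 :=
    prod_eq_one fun p hp => by simp [hμp p hp]
  have hR : ∏ p ∈ F, ((1 : R[X]) - X ^ p) ^ (μ (n / p)).toNat = ∏ p ∈ F, (1 - X ^ p) :=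
    prod_congr rfl fun p hp => by simp [hμp p hp]
  have key := congrArg (Ideal.Quotient.mk (Ideal.span {X ^ N}))
    (cyclotomic_mul_prod_one_sub_X_pow_pow_toNat R hn1)
  rw [map_mul, mk_span_X_pow_prod_one_sub_X_pow_pow hsub hbig,
    mk_span_X_pow_prod_one_sub_X_pow_pow hsub hbig, prod_insert h1F, prod_insert h1F, hL, hR,
    Nat.div_one, hμn] at key
  simp only [neg_neg, Int.reduceToNat, pow_one, pow_zero, mul_one, one_mul] at key
  rw [map_mul, key, mk_span_X_pow_prod_one_sub_X_pow hN]

theorem coeff_cyclotomic_prod_primes (R : Type*) [CommRing R] [IsDomain R]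
    (hF : ∀ p ∈ F, p.Prime) (hodd : Odd #F) {N : ℕ}
    (hN : ∀ p ∈ F, ∀ q ∈ F, p ≠ q → N ≤ p + q) {k : ℕ} (hk : k < N) :
    (cyclotomic (∏ p ∈ F, p) R).coeff k = 1 - #{p ∈ F | p ≤ k} := by
  set mk := Ideal.Quotient.mk (Ideal.span {(X : R[X]) ^ N})
  have hgeom : mk ((1 - X) * ∑ i ∈ range N, X ^ i) = 1 := by
    rw [mul_neg_geom_sum, map_sub, map_one, mk_span_X_pow_X_pow_of_le le_rfl, sub_zero]
  have hcyc : mk (cyclotomic (∏ p ∈ F, p) R) =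
      mk ((1 - ∑ p ∈ F, X ^ p) * ∑ i ∈ range N, X ^ i) := by
    rw [← mul_one (mk _), ← hgeom, ← map_mul, ← mul_assoc, map_mul,
      mk_span_X_pow_cyclotomic_prod_primes_mul_one_sub_X R hF hodd hN, ← map_mul]
  rw [coeff_eq_of_mk_span_X_pow_eq hcyc hk, coeff_one_sub_sum_X_pow_mul_geom_sum F hk]

end PrimeProduct

theorem Polynomial.coeff_comp_neg_X {R : Type*} [CommRing R] (p : R[X]) (k : ℕ) :
    (p.comp (-X)).coeff k = (-1) ^ k * p.coeff k := by
  induction p using Polynomial.induction_on' with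
  | add p q hp hq => simp only [add_comp, coeff_add, hp, hq, mul_add]
  | monomial n a =>
    rw [← C_mul_X_pow_eq_monomial, mul_comp, C_comp, X_pow_comp, neg_pow, mul_left_comm,
      ← C_1, ← C_neg, ← C_pow, coeff_C_mul, coeff_C_mul_X_pow]
    split_ifs with h
    · rw [h]
    · rw [mul_zero, mul_zero]

theorem cyclotomic_two_mul_of_odd (R : Type*) [CommRing R] {n : ℕ} (hn : Odd n) :
    cyclotomic (2 * n) R = (-1) ^ n.totient * (cyclotomic n R).comp (-X) := by
  suffices h : cyclotomic (2 * n) ℤ = (-1) ^ n.totient * (cyclotomic n ℤ).comp (-X) by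
    simpa [map_cyclotomic, Polynomial.map_comp] using congrArg (map (Int.castRingHom R)) h
  apply map_injective (Int.castRingHom ℚ) Int.cast_injective
  simp only [map_cyclotomic, Polynomial.map_mul, Polynomial.map_comp, Polynomial.map_pow,
    Polynomial.map_neg, Polynomial.map_one, map_X]
  have hn0 : n ≠ 0 := hn.pos.ne'
  obtain ⟨ζ, hζ⟩ : ∃ ζ : ℂ, IsPrimitiveRoot ζ n := ⟨_, Complex.isPrimitiveRoot_exp n hn0⟩
  have hnegζ : IsPrimitiveRoot (-ζ) (2 * n) := by
    convert IsPrimitiveRoot.orderOf (-ζ)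
    rw [neg_eq_neg_one_mul, (Commute.all _ _).orderOf_mul_eq_mul_orderOf_of_coprime]
    · simp [hζ.eq_orderOf]
    · simp [← hζ.eq_orderOf, hn]
  rw [cyclotomic_eq_minpoly_rat hnegζ (by omega), minpoly.neg, ← cyclotomic_eq_minpoly_rat hζ
    hn.pos, natDegree_cyclotomic]

theorem coeff_cyclotomic_two_mul_of_odd (R : Type*) [CommRing R] {n : ℕ} (hn : Odd n) (h2 : 2 < n)
    (k : ℕ) : (cyclotomic (2 * n) R).coeff k = (-1) ^ k * (cyclotomic n R).coeff k := by
  rw [cyclotomic_two_mul_of_odd R hn, (Nat.totient_even h2).neg_one_pow, one_mul,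
    coeff_comp_neg_X]

theorem sum_indicator_one_div_primes_Ioc_two_mul_le {x : ℕ} (hx : 0 < x) :
    ∑ i ∈ Ioc x (2 * x), Set.indicator {p : ℕ | p.Prime} (fun n : ℕ => (1 : ℝ) / n) i ≤
      #{p ∈ Ioc x (2 * x) | p.Prime} / x := by
  rw [sum_indicator_eq_sum_filter, ← mul_one_div, ← nsmul_eq_mul]
  exact sum_le_card_nsmul _ _ _ fun i hi => one_div_le_one_div_of_le (by positivity)
    (by exact_mod_cast (mem_Ioc.1 (mem_filter.1 hi).1).1.le)

theorem exists_le_card_primes_Ioc_two_mul (t x₀ : ℕ) :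
    ∃ x, x₀ ≤ x ∧ t ≤ #{p ∈ Ioc x (2 * x) | p.Prime} := by
  wlog hx₀ : 0 < x₀ generalizing x₀ with H
  · obtain ⟨x, -, ht⟩ := H 1 one_pos
    exact ⟨x, by omega, ht⟩
  by_contra! hfew
  set f := Set.indicator {p : ℕ | p.Prime} fun n : ℕ => (1 : ℝ) / n
  have hf0 : ∀ n, 0 ≤ f n := Set.indicator_nonneg fun _ _ => by positivity
  have hblock (K : ℕ) : ∑ i ∈ Ioc (x₀ * 2 ^ K) (2 * (x₀ * 2 ^ K)), f i ≤ t / x₀ * (1 / 2) ^ K :=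
    calc ∑ i ∈ Ioc (x₀ * 2 ^ K) (2 * (x₀ * 2 ^ K)), f i ≤ t / ((x₀ * 2 ^ K : ℕ) : ℝ) := by
          grw [sum_indicator_one_div_primes_Ioc_two_mul_le (by positivity),
            hfew _ (Nat.le_mul_of_pos_right _ (by positivity))]
      _ = t / x₀ * (1 / 2) ^ K := by
          push_cast
          rw [one_div_pow, div_mul_div_comm, mul_one]
  have hpartial (K : ℕ) : ∑ i ∈ Iic (x₀ * 2 ^ K), f i ≤
      ∑ i ∈ Iic x₀, f i + t / x₀ * ∑ j ∈ range K, (1 / 2 : ℝ) ^ j := by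
    induction K with
    | zero => simp
    | succ K ih =>
      rw [show x₀ * 2 ^ (K + 1) = 2 * (x₀ * 2 ^ K) by ring,
        ← Iic_union_Ioc_eq_Iic (show x₀ * 2 ^ K ≤ 2 * (x₀ * 2 ^ K) by omega),
        sum_union (Iic_disjoint_Ioc le_rfl), sum_range_succ, mul_add]
      linarith [hblock K]
  refine not_summable_one_div_on_primes
    (summable_of_sum_range_le (c := ∑ i ∈ Iic x₀, f i + t / x₀ * 2) hf0 fun n => ?_)
  calc ∑ i ∈ range n, f i ≤ ∑ i ∈ Iic (x₀ * 2 ^ n), f i := by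
        refine sum_le_sum_of_subset_of_nonneg (fun i hi => mem_Iic.2 ?_) fun i _ _ => hf0 i
        have := n.lt_two_pow_self
        have := Nat.le_mul_of_pos_left (2 ^ n) hx₀
        rw [mem_range] at hi
        omega
    _ ≤ ∑ i ∈ Iic x₀, f i + t / x₀ * 2 := by
        grw [hpartial n, sum_geometric_two_le]

theorem Finset.exists_mem_card_filter_le_eq {α : Type*} [LinearOrder α] {s : Finset α} {j : ℕ}
    (hj0 : j ≠ 0) (hj : j ≤ #s) : ∃ a ∈ s, #{b ∈ s | b ≤ a} = j := by
  induction s using Finset.induction_on_max generalizing j with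
  | empty => simp at hj; omega
  | insert a s hlt ih =>
    have ha : a ∉ s := fun h => (hlt a h).false
    rw [card_insert_of_notMem ha] at hj
    rcases hj.eq_or_lt with rfl | hj
    · refine ⟨a, mem_insert_self a s, ?_⟩
      rw [filter_true_of_mem fun b hb => ?_, card_insert_of_notMem ha]
      rcases mem_insert.1 hb with rfl | hb
      exacts [le_rfl, (hlt b hb).le]
    · obtain ⟨b, hb, hcard⟩ := ih hj0 (by omega)
      refine ⟨b, mem_insert_of_mem hb, ?_⟩
      rwa [filter_insert, if_neg (hlt b hb).not_ge]

theorem exists_cyclotomic_coeff_eq_one_sub {c : ℕ} (hc : c ≠ 0) :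
    ∃ n k, Odd n ∧ 2 < n ∧ Odd k ∧ (cyclotomic n ℤ).coeff k = 1 - c := by
  obtain ⟨x, hx, hprimes⟩ := exists_le_card_primes_Ioc_two_mul (2 * c + 1) 2
  obtain ⟨F, hFsub, hFcard⟩ := exists_subset_card_eq hprimes
  have hF : ∀ p ∈ F, p.Prime ∧ x < p ∧ p ≤ 2 * x := fun p hp => by
    obtain ⟨hIoc, hp⟩ := mem_filter.1 (hFsub hp)
    exact ⟨hp, mem_Ioc.1 hIoc⟩
  have hFodd : ∀ p ∈ F, Odd p := fun p hp => (hF p hp).1.odd_of_ne_two (by have := hF p hp; omega)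
  obtain ⟨p, hpF, hpc⟩ := F.exists_mem_card_filter_le_eq hc (by omega)
  refine ⟨∏ q ∈ F, q, p, ?_, ?_, hFodd p hpF, ?_⟩
  · rw [Nat.odd_iff, prod_nat_mod, prod_congr rfl fun q hq => Nat.odd_iff.1 (hFodd q hq),
      prod_const_one, Nat.one_mod]
  · exact (show 2 < p by linarith [hF p hpF]).trans_le <|
      Nat.le_of_dvd (prod_pos fun q hq => (hF q hq).1.pos) (dvd_prod_of_mem _ hpF)
  · rw [coeff_cyclotomic_prod_primes ℤ (fun q hq => (hF q hq).1) (hFcard ▸ odd_two_mul_add_one c)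
      (N := 2 * x + 1) (fun q hq r hr _ => by linarith [hF q hq, hF r hr]) (by linarith [hF p hpF]),
      hpc]

theorem cyclotomic_coeff_surjective :
    {z : ℤ | ∃ n k : ℕ, (Polynomial.cyclotomic n ℤ).coeff k = z} = Set.univ := by
  refine Set.eq_univ_of_forall fun z => ?_
  rcases le_or_gt z 0 with hz | hz
  · obtain ⟨n, k, -, -, -, hcoeff⟩ := exists_cyclotomic_coeff_eq_one_sub (c := (1 - z).toNat)
      (by omega)
    exact ⟨n, k, by rw [hcoeff]; omega⟩
  · obtain ⟨n, k, hn, h2, hk, hcoeff⟩ := exists_cyclotomic_coeff_eq_one_sub (c := (z + 1).toNat)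
      (by omega)
    exact ⟨2 * n, k, by rw [coeff_cyclotomic_two_mul_of_odd ℤ hn h2, hk.neg_one_pow, hcoeff]; omega⟩
end

section
/- For every k ≥ 13 there exist consecutive odd primes p₁ < p₂ < p₃ with p₃ ≤ k < p₁ + p₂. -/
/-!
Take `p₃` the largest prime `≤ k` and `p₁ < p₂` the two primes before it. If `p₁ + p₂ ≤ k`,
then `(p₁, 2 p₁]` contains no primes besides `p₂` and `p₃`. This contradicts the fact that
`(n, 2n]` contains at least three primes for `n ≥ 9`. For large `n` this is Erdős's proof of
Bertrand's postulate: primes in `(n, 2n]` divide `centralBinom n` exactly once, so two of them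
contribute at most `(2n)²`, and the main inequality still wins with an extra factor `n³`.
Small `n` are covered by an explicit chain of primes.
-/

section

open Real

theorem concaveOn_mul_log_add_sqrt_mul_log_sub {a : ℝ} (ha : 0 ≤ a) (c : ℝ) :
    ConcaveOn ℝ (Set.Ioi (1 / 2)) fun x => a * log x + √(2 * x) * log (2 * x) - c * x := by
  have hlog : ConcaveOn ℝ (Set.Ioi (1 / 2)) fun x => a * log x :=
    (strictConcaveOn_log_Ioi.concaveOn.subset (Set.Ioi_subset_Ioi (by norm_num))
      (convex_Ioi _)).smul ha
  have hsqrt : ConcaveOn ℝ (Set.Ioi (1 / 2)) fun x => √(2 * x) * log (2 * x) := by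
    refine (strictConcaveOn_sqrt_mul_log_Ioi.concaveOn.comp_linearMap
      ((2 : ℝ) • LinearMap.id)).subset (fun x (hx : 1 / 2 < x) => ?_) (convex_Ioi _)
    change 1 < 2 * x
    linarith
  exact (hlog.add hsqrt).sub ((c • LinearMap.id : ℝ →ₗ[ℝ] ℝ).convexOn (convex_Ioi _))

theorem four_mul_log_add_sqrt_mul_log_le {x : ℝ} (x_large : 2048 ≤ x) :
    4 * log x + √(2 * x) * log (2 * x) ≤ log 4 / 3 * x := by
  let f x := 4 * log x + √(2 * x) * log (2 * x) - log 4 / 3 * x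
  have h18 : 0 ≤ f 18 := by
    have : log 4 ≤ log 36 := log_le_log (by norm_num) (by norm_num)
    have : 0 ≤ log 18 := log_nonneg (by norm_num)
    simp only [f, show (2 * 18 : ℝ) = 6 ^ 2 by norm_num, sqrt_sq (by norm_num : (0 : ℝ) ≤ 6)]
    norm_num
    linarith
  have h2048 : f 2048 ≤ 0 := by
    have : 0 < log 2 := log_pos one_lt_two
    simp only [f]
    rw [show (2 * 2048 : ℝ) = 64 ^ 2 by norm_num, sqrt_sq (by norm_num),
      show (64 ^ 2 : ℝ) = 2 ^ 12 by norm_num, show (2048 : ℝ) = 2 ^ 11 by norm_num,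
      show (4 : ℝ) = 2 ^ 2 by norm_num, log_pow, log_pow, log_pow]
    push_cast
    linarith
  -- A concave function that has decreased from `18` to `2048` keeps decreasing beyond `2048`.
  have hfx : f x ≤ f 2048 :=
    (concaveOn_mul_log_add_sqrt_mul_log_sub (by norm_num) (log 4 / 3)).right_le_of_le_left''
      (by norm_num) (by simp only [Set.mem_Ioi]; linarith) (by norm_num) x_large (h2048.trans h18)
  simp only [f] at hfx h2048
  linarith

theorem real_main_inequality_pow_four {x : ℝ} (x_large : 2048 ≤ x) :
    x ^ 4 * (2 * x) ^ √(2 * x) * 4 ^ (2 * x / 3) ≤ 4 ^ x := by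
  have hx : 0 < x := by linarith
  rw [← log_le_log_iff (by positivity) (by positivity), log_mul (by positivity) (by positivity),
    log_mul (by positivity) (by positivity), log_pow, log_rpow (by positivity),
    log_rpow (by positivity), log_rpow (by positivity)]
  push_cast
  linarith [four_mul_log_add_sqrt_mul_log_le x_large]

end

open Nat Finset

theorem prod_pow_factorization_centralBinom_range_le (n : ℕ) :
    ∏ p ∈ range (2 * n / 3 + 1), p ^ (centralBinom n).factorization p ≤
      (2 * n) ^ sqrt (2 * n) * 4 ^ (2 * n / 3) := by
  rcases Nat.eq_zero_or_pos n with rfl | n_pos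
  · simp
  let f x := x ^ n.centralBinom.factorization x
  let S := {p ∈ range (2 * n / 3 + 1) | p.Prime}
  have hS : ∏ x ∈ S, f x = ∏ x ∈ range (2 * n / 3 + 1), f x := by
    refine prod_filter_of_ne fun p _ h => ?_
    contrapose h
    simp only [f, factorization_eq_zero_of_not_prime n.centralBinom h, pow_zero]
  rw [← hS, ← prod_filter_mul_prod_filter_not S (· ≤ sqrt (2 * n))]
  gcongr
  · refine (prod_le_pow_card _ _ _ fun p _ => pow_factorization_choose_le (by omega)).trans ?_
    refine pow_right_mono₀ (by omega) ((card_le_card fun x hx => ?_).trans (card_Icc 1 _).le)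
    obtain ⟨h1, h2⟩ := mem_filter.1 hx
    exact mem_Icc.mpr ⟨(mem_filter.1 h1).2.one_lt.le, h2⟩
  · refine le_trans ?_ (primorial_le_four_pow (2 * n / 3))
    refine (prod_le_prod' fun p hp => (?_ : f p ≤ p)).trans ?_
    · obtain ⟨h1, h2⟩ := mem_filter.1 hp
      refine (pow_right_mono₀ (mem_filter.1 h1).2.one_lt.le ?_).trans (pow_one p).le
      exact factorization_choose_le_one (sqrt_lt'.mp <| not_le.1 h2)
    exact prod_le_prod_of_subset_of_one_le' (filter_subset _ _)
      fun p hp _ => (mem_filter.1 hp).2.one_lt.le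

theorem prod_pow_factorization_centralBinom_Ico_le {n : ℕ} (n_large : 2 < n) :
    ∏ p ∈ Ico (2 * n / 3 + 1) (2 * n + 1), p ^ (centralBinom n).factorization p ≤
      (2 * n) ^ #{p ∈ Ioc n (2 * n) | p.Prime} := by
  rw [← prod_subset (s₁ := {p ∈ Ioc n (2 * n) | p.Prime}) (fun p hp => ?_) (fun p hp hp' => ?_)]
  · exact prod_le_pow_card _ _ _ fun p _ => pow_factorization_choose_le (n := 2 * n) (by omega)
  · simp only [mem_filter, mem_Ioc] at hp
    simp only [mem_Ico]
    omega
  · simp only [mem_filter, mem_Ioc, mem_Ico] at hp hp'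
    by_cases hprime : p.Prime
    · simp only [hprime, and_true] at hp'
      rw [factorization_centralBinom_of_two_mul_self_lt_three_mul n_large (by omega) (by omega),
        pow_zero]
    · rw [factorization_eq_zero_of_not_prime _ hprime, pow_zero]

theorem centralBinom_le_mul_pow_card_primes_Ioc {n : ℕ} (n_large : 2 < n) :
    centralBinom n ≤
      (2 * n) ^ sqrt (2 * n) * 4 ^ (2 * n / 3) * (2 * n) ^ #{p ∈ Ioc n (2 * n) | p.Prime} := by
  rw [← prod_pow_factorization_centralBinom,
    ← prod_range_mul_prod_Ico _ (by omega : 2 * n / 3 + 1 ≤ 2 * n + 1)]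
  exact mul_le_mul' (prod_pow_factorization_centralBinom_range_le n)
    (prod_pow_factorization_centralBinom_Ico_le n_large)

theorem main_inequality_pow_four {n : ℕ} (n_large : 2048 ≤ n) :
    n ^ 4 * (2 * n) ^ sqrt (2 * n) * 4 ^ (2 * n / 3) ≤ 4 ^ n := by
  rw [← @cast_le ℝ]
  push_cast
  rw [← Real.rpow_natCast _ (sqrt _), ← Real.rpow_natCast _ (2 * n / 3), ← Real.rpow_natCast _ n]
  refine le_trans ?_ (real_main_inequality_pow_four (by exact_mod_cast n_large))
  gcongr
  · exact_mod_cast (by omega : 1 ≤ 2 * n)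
  · exact_mod_cast Real.nat_sqrt_le_real_sqrt
  · norm_num
  · exact cast_div_le.trans (by norm_cast)

theorem three_le_card_primes_Ioc_of_large {n : ℕ} (n_large : 2048 ≤ n) :
    3 ≤ #{p ∈ Ioc n (2 * n) | p.Prime} := by
  by_contra! h
  have hcube : n * (2 * n) ^ 2 ≤ n ^ 4 := by
    calc n * (2 * n) ^ 2 = 4 * n ^ 3 := by ring
      _ ≤ n * n ^ 3 := by gcongr; omega
      _ = n ^ 4 := by ring
  refine (four_pow_lt_mul_centralBinom n (by omega)).not_ge ?_
  calc n * centralBinom n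
      ≤ n * ((2 * n) ^ sqrt (2 * n) * 4 ^ (2 * n / 3) * (2 * n) ^ 2) := by
        grw [centralBinom_le_mul_pow_card_primes_Ioc (by omega), Nat.le_of_lt_succ h]
        omega
    _ = n * (2 * n) ^ 2 * ((2 * n) ^ sqrt (2 * n) * 4 ^ (2 * n / 3)) := by ring
    _ ≤ 4 ^ n := by grw [hcube, ← main_inequality_pow_four n_large, mul_assoc]

theorem three_le_card_primes_Ioc_of_prime_triple {n : ℕ} (a b c d : ℕ)
    (hbcd : b.Prime ∧ c.Prime ∧ d.Prime ∧ b < c ∧ c < d ∧ d ≤ 2 * a)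
    (H : n < a → 3 ≤ #{p ∈ Ioc n (2 * n) | p.Prime}) (hn : n < b) :
    3 ≤ #{p ∈ Ioc n (2 * n) | p.Prime} := by
  obtain ⟨hb, hc, hd, hbc, hcd, hd2a⟩ := hbcd
  by_cases ha : n < a
  · exact H ha
  refine two_lt_card_iff.2 ⟨b, c, d, ?_, ?_, ?_, hbc.ne, (hbc.trans hcd).ne, hcd.ne⟩ <;>
    simp only [mem_filter, mem_Ioc, hb, hc, hd, and_true] <;> omega

theorem three_le_card_primes_Ioc {n : ℕ} (hn : 9 ≤ n) :
    3 ≤ #{p ∈ Ioc n (2 * n) | p.Prime} := by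
  rcases le_or_gt 2053 n with h | h
  · exact three_le_card_primes_Ioc_of_large (by omega)
  revert h
  refine three_le_card_primes_Ioc_of_prime_triple 1039 2053 2063 2069 (by norm_num) ?_
  refine three_le_card_primes_Ioc_of_prime_triple 541 1039 1049 1051 (by norm_num) ?_
  refine three_le_card_primes_Ioc_of_prime_triple 281 541 547 557 (by norm_num) ?_
  refine three_le_card_primes_Ioc_of_prime_triple 149 281 283 293 (by norm_num) ?_
  refine three_le_card_primes_Ioc_of_prime_triple 79 149 151 157 (by norm_num) ?_
  refine three_le_card_primes_Ioc_of_prime_triple 47 79 83 89 (by norm_num) ?_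
  refine three_le_card_primes_Ioc_of_prime_triple 31 47 53 59 (by norm_num) ?_
  refine three_le_card_primes_Ioc_of_prime_triple 23 31 37 41 (by norm_num) ?_
  refine three_le_card_primes_Ioc_of_prime_triple 17 23 29 31 (by norm_num) ?_
  refine three_le_card_primes_Ioc_of_prime_triple 13 17 19 23 (by norm_num) ?_
  refine three_le_card_primes_Ioc_of_prime_triple 11 13 17 19 (by norm_num) ?_
  refine three_le_card_primes_Ioc_of_prime_triple 9 11 13 17 (by norm_num) ?_
  omega

theorem exists_greatest_prime_lt {m : ℕ} (hm : 2 < m) :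
    ∃ p, p.Prime ∧ p < m ∧ ∀ q, q.Prime → p < q → m ≤ q := by
  have hne : (primesBelow m).Nonempty := ⟨2, mem_primesBelow.2 ⟨hm, prime_two⟩⟩
  obtain ⟨hlt, hp⟩ := mem_primesBelow.1 ((primesBelow m).max'_mem hne)
  refine ⟨_, hp, hlt, fun q hq hpq => not_lt.1 fun hqm => ?_⟩
  exact (le_max' _ q (mem_primesBelow.2 ⟨hqm, hq⟩)).not_gt hpq

theorem consecutive_primes_interval (k : ℕ) (hk : 13 ≤ k) :
    ∃ p₁ p₂ p₃ : ℕ, p₁.Prime ∧ p₂.Prime ∧ p₃.Prime ∧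
      Odd p₁ ∧ p₁ < p₂ ∧ p₂ < p₃ ∧
      (∀ q : ℕ, q.Prime → p₁ < q → p₂ ≤ q) ∧
      (∀ q : ℕ, q.Prime → p₂ < q → p₃ ≤ q) ∧
      p₃ ≤ k ∧ k < p₁ + p₂ := by
  obtain ⟨p₃, hp₃, hp₃k, hnext₃⟩ := exists_greatest_prime_lt (m := k + 1) (by omega)
  have h13 := hnext₃ 13 (by norm_num)
  obtain ⟨p₂, hp₂, hp₂₃, hnext₂⟩ := exists_greatest_prime_lt (m := p₃) (by omega)
  have h11 := hnext₂ 11 (by norm_num)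
  obtain ⟨p₁, hp₁, hp₁₂, hnext₁⟩ := exists_greatest_prime_lt (m := p₂) (by omega)
  have h7 := hnext₁ 7 (by norm_num)
  have hp₁8 : p₁ ≠ 8 := by rintro rfl; norm_num at hp₁
  refine ⟨p₁, p₂, p₃, hp₁, hp₂, hp₃, hp₁.odd_of_ne_two (by omega), hp₁₂, hp₂₃, hnext₁, hnext₂,
    by omega, not_le.1 fun hk' => ?_⟩
  -- `(p₁, 2 p₁]` for `p₁ ≥ 9`; the only smaller case is `p₁ = 7`, where `p₁ + p₂ ≥ 18`.
  have hsub : {q ∈ Ioc (max p₁ 9) (2 * max p₁ 9) | q.Prime} ⊆ {p₂, p₃} := by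
    intro q hq
    obtain ⟨hq, hqprime⟩ := mem_filter.1 hq
    have := hnext₁ q hqprime
    have := hnext₂ q hqprime
    have := hnext₃ q hqprime
    simp only [mem_Ioc] at hq
    simp only [mem_insert, mem_singleton]
    omega
  have := three_le_card_primes_Ioc (le_max_right p₁ 9)
  have := (card_le_card hsub).trans card_le_two
  omega
end
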